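/- Let Σ₁ := {a, b, c, f}, Σ₂ := {b, c, e}, L₁ := { cⁿ } ∪ { cⁿ·a·cᵐ } ∪ { cⁿ·f } ∪ { cⁿ·f·b·cᵐ } (n, m ≥ 0) over Σ₁, L₂ := { cⁿ } ∪ { cⁿ·b } ∪ { cⁿ·b·e·cᵐ } (n, m ≥ 0) over Σ₂, and L := L₁ ∥ L₂ over Σ := {a, b, c, e, f} with observable events Σₒ := {c, e} and projection M onto Σₒ. Then: (i) every string w ∈ L in which f does not occur has an observation consisting only of c's, i.e., M(w) ∈ {c}*; and (ii) every string w ∈ L in which at least two events occur after the occurrence of f contains the event e, so M(w) contains an occurrence of e. Consequently, the observations of sufficiently extended faulty strings of L are disjoint from the observations of non-faulty strings of L. -/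

import Mathlib

/-- The events of the paper's example. -/
inductive Ev : Type
  | a | b | c | e | f
deriving DecidableEq

/-- Natural projection: erase all events not in `S`. -/
def proj (S : Finset Ev) (s : List Ev) : List Ev :=
  s.filter (· ∈ S)

/-- Parallel composition of two languages over alphabets `S1` and `S2`. -/
def par (S1 S2 : Finset Ev) (L1 L2 : Set (List Ev)) : Set (List Ev) :=
  {s | (∀ x ∈ s, x ∈ S1 ∪ S2) ∧ proj S1 s ∈ L1 ∧ proj S2 s ∈ L2}

/-- The language of automaton `G₁` over `Σ₁ = {a,b,c,f}`:
`c* ∪ c*·a·c* ∪ c*·f ∪ c*·f·b·c*`. -/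
def L1 : Set (List Ev) :=
  {w | ∃ n, w = List.replicate n Ev.c} ∪
  {w | ∃ n m, w = List.replicate n Ev.c ++ Ev.a :: List.replicate m Ev.c} ∪
  {w | ∃ n, w = List.replicate n Ev.c ++ [Ev.f]} ∪
  {w | ∃ n m, w = List.replicate n Ev.c ++ Ev.f :: Ev.b :: List.replicate m Ev.c}

/-- The language of automaton `G₂` over `Σ₂ = {b,c,e}`:
`c* ∪ c*·b ∪ c*·b·e·c*`. -/
def L2 : Set (List Ev) :=
  {w | ∃ n, w = List.replicate n Ev.c} ∪
  {w | ∃ n, w = List.replicate n Ev.c ++ [Ev.b]} ∪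
  {w | ∃ n m, w = List.replicate n Ev.c ++ Ev.b :: Ev.e :: List.replicate m Ev.c}

/-- The global language `L := L₁ ∥ L₂`. -/
def L : Set (List Ev) :=
  par {Ev.a, Ev.b, Ev.c, Ev.f} {Ev.b, Ev.c, Ev.e} L1 L2

/-! An `e` is produced by `G₂` only after its `b`, and `G₁` emits `b` only right after the
fault `f`; hence a fault-free string of `L` contains no `e` and is observed as a power of `c`.
If a string of `L` with two events after `f` had no `e`, it would lie in `Σ₁*`, hence in `L₁`,
so it would be `cⁿ f b cᵐ⁺¹`; but its projection `cⁿ b cᵐ⁺¹` onto `Σ₂` is not in `L₂`, where a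
`b` is followed by nothing or by `e`. -/

lemma mem_proj {S : Finset Ev} {s : List Ev} {x : Ev} : x ∈ proj S s ↔ x ∈ s ∧ x ∈ S := by
  simp [proj]

lemma proj_eq_self {S : Finset Ev} {s : List Ev} (h : ∀ x ∈ s, x ∈ S) : proj S s = s :=
  List.filter_eq_self.mpr (by simpa using h)

lemma f_mem_of_b_mem_L1 {s : List Ev} (hs : s ∈ L1) (hb : Ev.b ∈ s) : Ev.f ∈ s := by
  rcases hs with ((⟨n, rfl⟩ | ⟨n, m, rfl⟩) | ⟨n, rfl⟩) | ⟨n, m, rfl⟩ <;>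
    simp_all [List.mem_replicate]

lemma b_mem_of_e_mem_L2 {s : List Ev} (hs : s ∈ L2) (he : Ev.e ∈ s) : Ev.b ∈ s := by
  rcases hs with (⟨n, rfl⟩ | ⟨n, rfl⟩) | ⟨n, m, rfl⟩ <;> simp_all [List.mem_replicate]

lemma f_mem_of_e_mem {w : List Ev} (hw : w ∈ L) (he : Ev.e ∈ w) : Ev.f ∈ w := by
  obtain ⟨-, hw1, hw2⟩ := hw
  have hb : Ev.b ∈ w := (mem_proj.mp (b_mem_of_e_mem_L2 hw2 (mem_proj.mpr ⟨he, by decide⟩))).1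
  exact (mem_proj.mp (f_mem_of_b_mem_L1 hw1 (mem_proj.mpr ⟨hb, by decide⟩))).1

lemma exists_proj_eq_replicate_of_e_notMem {w : List Ev} (he : Ev.e ∉ w) :
    ∃ k, proj {Ev.c, Ev.e} w = List.replicate k Ev.c := by
  refine ⟨_, List.eq_replicate_iff.mpr ⟨rfl, fun x hx => ?_⟩⟩
  obtain ⟨hxw, hx⟩ := mem_proj.mp hx
  rcases Finset.mem_insert.mp hx with rfl | hx
  · rfl
  · exact absurd (Finset.mem_singleton.mp hx ▸ hxw) he

lemma exists_eq_of_mem_L1_of_two_le_length {s u v : List Ev} (hs : s ∈ L1)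
    (h : s = u ++ Ev.f :: v) (hv : 2 ≤ v.length) :
    ∃ n m, s = List.replicate n Ev.c ++ Ev.f :: Ev.b :: List.replicate (m + 1) Ev.c := by
  have hf : Ev.f ∈ s := h ▸ List.mem_append_right u List.mem_cons_self
  rcases hs with ((⟨n, rfl⟩ | ⟨n, m, rfl⟩) | ⟨n, rfl⟩) | ⟨n, m, rfl⟩
  · simp [List.mem_replicate] at hf
  · simp [List.mem_replicate] at hf
  · have hv_nil := (Iff.mp (List.append_cons_inj_of_notMem
      (by simp [List.mem_replicate]) (by simp)) h).2.2
    simp [← hv_nil] at hv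
  · have hv_eq := (Iff.mp (List.append_cons_inj_of_notMem
      (by simp [List.mem_replicate]) (by simp [List.mem_replicate])) h).2.2
    obtain _ | m := m
    · simp [← hv_eq] at hv
    · exact ⟨n, m, rfl⟩

lemma replicate_append_b_cons_replicate_succ_notMem_L2 (n m : ℕ) :
    List.replicate n Ev.c ++ Ev.b :: List.replicate (m + 1) Ev.c ∉ L2 := by
  rintro ((⟨k, hk⟩ | ⟨k, hk⟩) | ⟨k, l, hk⟩)
  · have hb : Ev.b ∈ List.replicate k Ev.c := hk ▸ List.mem_append_right _ List.mem_cons_self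
    simp [List.mem_replicate] at hb
  · have hc_nil := (Iff.mp (List.append_cons_inj_of_notMem
      (by simp [List.mem_replicate]) (by simp)) hk).2.2
    simp at hc_nil
  · have he : Ev.e ∈ List.replicate k Ev.c ++ Ev.b :: Ev.e :: List.replicate l Ev.c := by simp
    simp [← hk, List.mem_replicate] at he

lemma e_mem_of_faulty {w u v : List Ev} (hw : w ∈ L) (h : w = u ++ Ev.f :: v)
    (hv : 2 ≤ v.length) : Ev.e ∈ w := by
  by_contra he
  obtain ⟨halph, hw1, hw2⟩ := hw
  have hproj1 : proj {Ev.a, Ev.b, Ev.c, Ev.f} w = w := proj_eq_self fun x hx => by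
    have hx' := halph x hx
    cases x <;> simp_all
  obtain ⟨n, m, rfl⟩ := exists_eq_of_mem_L1_of_two_le_length (hproj1 ▸ hw1) h hv
  have hproj2 : proj {Ev.b, Ev.c, Ev.e}
      (List.replicate n Ev.c ++ Ev.f :: Ev.b :: List.replicate (m + 1) Ev.c) =
      List.replicate n Ev.c ++ Ev.b :: List.replicate (m + 1) Ev.c := by
    simp [proj]
  exact replicate_append_b_cons_replicate_succ_notMem_L2 n m (hproj2 ▸ hw2)

/-- Structural facts about `L := L₁ ∥ L₂` with observable events `{c, e}`:
(i) every string of `L` without `f` has observation in `c*`; (ii) every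
string of `L` with at least two events after the occurrence of `f` contains
`e`, hence its observation contains `e`; consequently the observations of
such extended faulty strings are disjoint from those of non-faulty strings. -/
theorem stmt9 :
    (∀ w ∈ L, Ev.f ∉ w →
      ∃ k, proj {Ev.c, Ev.e} w = List.replicate k Ev.c) ∧
    (∀ w ∈ L, ∀ u v : List Ev, w = u ++ Ev.f :: v → 2 ≤ v.length →
      Ev.e ∈ w ∧ Ev.e ∈ proj {Ev.c, Ev.e} w) ∧
    (∀ w ∈ L, ∀ w' ∈ L,
      (∃ u v : List Ev, w = u ++ Ev.f :: v ∧ 2 ≤ v.length) → Ev.f ∉ w' →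
        proj {Ev.c, Ev.e} w ≠ proj {Ev.c, Ev.e} w') := by
  have nonfaulty : ∀ w ∈ L, Ev.f ∉ w → ∃ k, proj {Ev.c, Ev.e} w = List.replicate k Ev.c :=
    fun w hw hf => exists_proj_eq_replicate_of_e_notMem (mt (f_mem_of_e_mem hw) hf)
  have faulty : ∀ w ∈ L, ∀ u v : List Ev, w = u ++ Ev.f :: v → 2 ≤ v.length →
      Ev.e ∈ w ∧ Ev.e ∈ proj {Ev.c, Ev.e} w := fun w hw u v h hv =>
    have he := e_mem_of_faulty hw h hv
    ⟨he, mem_proj.mpr ⟨he, by decide⟩⟩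
  refine ⟨nonfaulty, faulty, ?_⟩
  rintro w hw w' hw' ⟨u, v, h, hv⟩ hf' hobs
  obtain ⟨k, hk⟩ := nonfaulty w' hw' hf'
  have he := (faulty w hw u v h hv).2
  rw [hobs, hk] at he
  simp [List.mem_replicate] at he
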